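/- Let P be the poset with minimum element x below three pairwise-incomparable elements p₁, p₂, p₃, all below a maximum y. The component module assigning K³ to x, K² to each pᵢ, K to y, with the maps given by the matrices [[1,0,0],[0,1,1]], [[1,0,1],[0,1,0]], [[1,1,0],[0,0,1]] from x to p₁,p₂,p₃ respectively and [1,1] from each pᵢ to y, decomposes as the direct sum of the interval module supported on all of P (dimension 1 everywhere, identity maps) and the semi-component module with K² at x, K at each pᵢ, 0 at y, and maps [1,1], [1,0], [0,1] from x. -/

import Mathlib

/-!
Every column of the three matrices sums to `1`, so the coordinate-sum functionals `σ` commute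
with the structure maps, and `N` is `σ` itself. Hence the line through `e₀ = (1,0,0)`, where
`σ = 1`, and its images span a summand on which every map is an isomorphism of lines, and the
kernels of `σ` form a complementary submodule, which is `0` at `y`. Dropping the first
coordinate identifies these kernels with `K²` and `K`, and turns the three maps out of `x` into
`[1,1]`, `[1,0]` and `[0,1]`.
-/

open Submodule LinearMap

section SpanSingleton

variable {K V W : Type*} [Field K] [AddCommGroup V] [Module K V] [AddCommGroup W] [Module K W]

theorem Submodule.isCompl_span_singleton_ker {f : V →ₗ[K] K} {u : V} (hu : f u = 1) :
    IsCompl (K ∙ u) (ker f) :=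
  have hf : Function.Surjective f := fun c => ⟨c • u, by simp [hu]⟩
  (isCompl_span_singleton_of_isCoatom_of_notMem (isCoatom_ker_of_surjective hf)
    (by simp [hu])).symm

theorem ne_zero_of_apply_eq_one {f : V →ₗ[K] K} {v : V} (hv : f v = 1) : v ≠ 0 :=
  ne_zero_of_map (f := f) (hv ▸ one_ne_zero)

theorem LinearMap.mapsTo_span_singleton (f : V →ₗ[K] W) {u : V} {w : W} (hw : f u = w) :
    ∀ v ∈ K ∙ u, f v ∈ K ∙ w := by
  intro v hv
  obtain ⟨c, rfl⟩ := mem_span_singleton.mp hv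
  rw [map_smul, hw]
  exact smul_mem _ c (mem_span_singleton_self w)

theorem LinearMap.bijective_restrict_span_singleton (f : V →ₗ[K] W) {u : V} {w : W}
    (hw : f u = w) (hw0 : w ≠ 0) (h : ∀ v ∈ K ∙ u, f v ∈ K ∙ w) :
    Function.Bijective (f.restrict h) := by
  refine ⟨(injective_iff_map_eq_zero _).mpr ?_, ?_⟩
  · rintro ⟨_, hv⟩ hfv
    obtain ⟨c, rfl⟩ := mem_span_singleton.mp hv
    have : c • w = 0 := by simpa [← hw] using congrArg Subtype.val hfv
    simp [(smul_eq_zero.mp this).resolve_right hw0]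
  · rintro ⟨_, hv⟩
    obtain ⟨c, rfl⟩ := mem_span_singleton.mp hv
    exact ⟨⟨c • u, smul_mem _ c (mem_span_singleton_self u)⟩, by ext; simp [hw]⟩

theorem LinearMap.mapsTo_ker_of_comp_eq {f : V →ₗ[K] W} {σ : V →ₗ[K] K} {τ : W →ₗ[K] K}
    (h : τ ∘ₗ f = σ) : ∀ v ∈ ker σ, f v ∈ ker τ := by
  intro v hv
  rwa [← h] at hv

end SpanSingleton

section SumCoords

variable (K : Type*) [Field K]

noncomputable def sumCoords (ι : Type*) [Fintype ι] : (ι → K) →ₗ[K] K := ∑ i, proj i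

variable {K}

@[simp] theorem sumCoords_apply {ι : Type*} [Fintype ι] (v : ι → K) :
    sumCoords K ι v = ∑ i, v i := by
  simp [sumCoords]

theorem sumCoords_comp_mulVecLin {m n : Type*} [Fintype m] [Fintype n] (A : Matrix m n K)
    (hA : ∀ j, ∑ i, A i j = 1) : sumCoords K m ∘ₗ A.mulVecLin = sumCoords K n := by
  refine LinearMap.ext fun v => ?_
  simp only [comp_apply, sumCoords_apply, Matrix.mulVecLin_apply, Matrix.mulVec, dotProduct]
  rw [Finset.sum_comm]
  simp [← Finset.sum_mul, hA]

variable (K)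

noncomputable def kerSumCoordsEquiv (n : ℕ) : ker (sumCoords K (Fin (n + 1))) ≃ₗ[K] (Fin n → K) :=
  LinearEquiv.ofBijective (funLeft K K Fin.succ ∘ₗ (ker _).subtype) <| by
    refine ⟨(injective_iff_map_eq_zero _).mpr ?_, fun w => ?_⟩
    · rintro ⟨v, hv⟩ htail
      have htail' : ∀ i : Fin n, v i.succ = 0 := fun i => congrFun htail i
      have hv0 : v 0 = 0 := by simpa [Fin.sum_univ_succ, htail'] using hv
      ext i
      exact Fin.cases hv0 htail' i
    · refine ⟨⟨Fin.cons (-∑ i, w i) w, ?_⟩, ?_⟩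
      · simp [Fin.sum_univ_succ]
      · ext i; simp [funLeft]

@[simp] theorem kerSumCoordsEquiv_apply (n : ℕ) (v : ker (sumCoords K (Fin (n + 1))))
    (i : Fin n) : kerSumCoordsEquiv K n v i = (v : Fin (n + 1) → K) i.succ := by
  unfold kerSumCoordsEquiv
  rfl

end SumCoords

theorem stmt_15 (K : Type*) [Field K]
    (M1 M2 M3 : (Fin 3 → K) →ₗ[K] (Fin 2 → K)) (N : (Fin 2 → K) →ₗ[K] K)
    (s1 s2 s3 : (Fin 2 → K) →ₗ[K] K)
    (hM1 : M1 = Matrix.mulVecLin !![(1 : K), 0, 0; 0, 1, 1])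
    (hM2 : M2 = Matrix.mulVecLin !![(1 : K), 0, 1; 0, 1, 0])
    (hM3 : M3 = Matrix.mulVecLin !![(1 : K), 1, 0; 0, 0, 1])
    (hN : N = (LinearMap.proj 0 : (Fin 2 → K) →ₗ[K] K) + LinearMap.proj 1)
    (hs1 : s1 = (LinearMap.proj 0 : (Fin 2 → K) →ₗ[K] K) + LinearMap.proj 1)
    (hs2 : s2 = (LinearMap.proj 0 : (Fin 2 → K) →ₗ[K] K))
    (hs3 : s3 = (LinearMap.proj 1 : (Fin 2 → K) →ₗ[K] K)) :
    ∃ (Ux Wx : Submodule K (Fin 3 → K)) (U1 W1 U2 W2 U3 W3 : Submodule K (Fin 2 → K))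
      (Uy Wy : Submodule K K),
      IsCompl Ux Wx ∧ IsCompl U1 W1 ∧ IsCompl U2 W2 ∧ IsCompl U3 W3 ∧
      IsCompl Uy Wy ∧
      -- the `U` summand is the interval module supported on all of `P`
      Module.finrank K Ux = 1 ∧ Module.finrank K U1 = 1 ∧
      Module.finrank K U2 = 1 ∧ Module.finrank K U3 = 1 ∧
      Module.finrank K Uy = 1 ∧
      (∃ (hU1 : ∀ v ∈ Ux, M1 v ∈ U1) (hU2 : ∀ v ∈ Ux, M2 v ∈ U2)
         (hU3 : ∀ v ∈ Ux, M3 v ∈ U3) (hUy1 : ∀ v ∈ U1, N v ∈ Uy)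
         (hUy2 : ∀ v ∈ U2, N v ∈ Uy) (hUy3 : ∀ v ∈ U3, N v ∈ Uy),
        Function.Bijective (M1.restrict hU1) ∧ Function.Bijective (M2.restrict hU2) ∧
        Function.Bijective (M3.restrict hU3) ∧ Function.Bijective (N.restrict hUy1) ∧
        Function.Bijective (N.restrict hUy2) ∧ Function.Bijective (N.restrict hUy3)) ∧
      -- the `W` summand is the given semi-component module
      Wy = ⊥ ∧
      (∃ (hW1 : ∀ v ∈ Wx, M1 v ∈ W1) (hW2 : ∀ v ∈ Wx, M2 v ∈ W2)
         (hW3 : ∀ v ∈ Wx, M3 v ∈ W3)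
         (ex : Wx ≃ₗ[K] (Fin 2 → K)) (e1 : W1 ≃ₗ[K] K) (e2 : W2 ≃ₗ[K] K)
         (e3 : W3 ≃ₗ[K] K),
        e1.toLinearMap ∘ₗ M1.restrict hW1 = s1 ∘ₗ ex.toLinearMap ∧
        e2.toLinearMap ∘ₗ M2.restrict hW2 = s2 ∘ₗ ex.toLinearMap ∧
        e3.toLinearMap ∘ₗ M3.restrict hW3 = s3 ∘ₗ ex.toLinearMap) := by
  
  set e0 : Fin 3 → K := Pi.single 0 1
  have he0 : sumCoords K (Fin 3) e0 = 1 := by simp [e0]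
  obtain rfl : N = sumCoords K (Fin 2) := by rw [hN, sumCoords, Fin.sum_univ_two]
  have h1 : sumCoords K (Fin 2) ∘ₗ M1 = sumCoords K (Fin 3) :=
    hM1 ▸ sumCoords_comp_mulVecLin _ fun j => by fin_cases j <;> simp
  have h2 : sumCoords K (Fin 2) ∘ₗ M2 = sumCoords K (Fin 3) :=
    hM2 ▸ sumCoords_comp_mulVecLin _ fun j => by fin_cases j <;> simp
  have h3 : sumCoords K (Fin 2) ∘ₗ M3 = sumCoords K (Fin 3) :=
    hM3 ▸ sumCoords_comp_mulVecLin _ fun j => by fin_cases j <;> simp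
  have hp1 : sumCoords K (Fin 2) (M1 e0) = 1 := (LinearMap.congr_fun h1 e0).trans he0
  have hp2 : sumCoords K (Fin 2) (M2 e0) = 1 := (LinearMap.congr_fun h2 e0).trans he0
  have hp3 : sumCoords K (Fin 2) (M3 e0) = 1 := (LinearMap.congr_fun h3 e0).trans he0
  let eW := (kerSumCoordsEquiv K 1).trans (LinearEquiv.funUnique (Fin 1) K K)
  refine ⟨K ∙ e0, ker (sumCoords K (Fin 3)), K ∙ M1 e0, ker (sumCoords K (Fin 2)),
    K ∙ M2 e0, ker (sumCoords K (Fin 2)), K ∙ M3 e0, ker (sumCoords K (Fin 2)), K ∙ 1, ⊥,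
    isCompl_span_singleton_ker he0, isCompl_span_singleton_ker hp1,
    isCompl_span_singleton_ker hp2, isCompl_span_singleton_ker hp3,
    ker_id (R := K) (M := K) ▸ isCompl_span_singleton_ker (id_apply 1),
    finrank_span_singleton (ne_zero_of_apply_eq_one he0),
    finrank_span_singleton (ne_zero_of_apply_eq_one hp1),
    finrank_span_singleton (ne_zero_of_apply_eq_one hp2),
    finrank_span_singleton (ne_zero_of_apply_eq_one hp3), finrank_span_singleton one_ne_zero,
    ⟨M1.mapsTo_span_singleton rfl, M2.mapsTo_span_singleton rfl, M3.mapsTo_span_singleton rfl,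
      mapsTo_span_singleton _ hp1, mapsTo_span_singleton _ hp2, mapsTo_span_singleton _ hp3,
      M1.bijective_restrict_span_singleton rfl (ne_zero_of_apply_eq_one hp1) _,
      M2.bijective_restrict_span_singleton rfl (ne_zero_of_apply_eq_one hp2) _,
      M3.bijective_restrict_span_singleton rfl (ne_zero_of_apply_eq_one hp3) _,
      bijective_restrict_span_singleton _ hp1 one_ne_zero _,
      bijective_restrict_span_singleton _ hp2 one_ne_zero _,
      bijective_restrict_span_singleton _ hp3 one_ne_zero _⟩,
    rfl, mapsTo_ker_of_comp_eq h1, mapsTo_ker_of_comp_eq h2, mapsTo_ker_of_comp_eq h3,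
    kerSumCoordsEquiv K 2, eW, eW, eW, ?_, ?_, ?_⟩
  all_goals
    refine LinearMap.ext fun v => ?_
    simp [eW, hM1, hM2, hM3, hs1, hs2, hs3, Matrix.mulVec, dotProduct, Fin.sum_univ_succ]
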